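/- Let W = W(A,T,φ) be a simple generalized Witt algebra over a field F of characteristic 0 (so A ≠ 0 and φ is nondegenerate), and suppose in addition that the abelian group A is finitely generated. Then every 2-local automorphism of W (no invertibility assumed) is a Lie algebra automorphism of W. -/

import Mathlib

/-! Generalized Witt algebras `W(A,T,φ)` over a field `F` of characteristic `0`,
following Djokovic-Zhao. Here `A` is an (additive) abelian group, `T` an
`F`-vector space, and `φ : T × A → F` is `F`-linear in the first variable and
additive in the second (encoded as `φ : T →ₗ[F] (A →+ F)`). -/

namespace GW

variable {F : Type*} [Field F]
variable {A : Type*} [AddCommGroup A]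
variable {T : Type*} [AddCommGroup T] [Module F T]
variable (φ : T →ₗ[F] (A →+ F))

/-- The bracket on finitely supported functions `A →₀ T`: the bilinear extension of
`[t^α a, t^β b] = t^(α+β) (φ a β • b - φ b α • a)`. -/
noncomputable def brk (x y : A →₀ T) : A →₀ T :=
  x.sum fun α a => y.sum fun β b => Finsupp.single (α + β) (φ a β • b - φ b α • a)

lemma brk_zero_left (y : A →₀ T) : brk φ 0 y = 0 := by
  simp [brk]

lemma brk_zero_right (x : A →₀ T) : brk φ x 0 = 0 := by
  simp [brk]

lemma brk_single_single (α β : A) (a b : T) :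
    brk φ (Finsupp.single α a) (Finsupp.single β b)
      = Finsupp.single (α + β) (φ a β • b - φ b α • a) := by
  unfold brk
  rw [Finsupp.sum_single_index, Finsupp.sum_single_index]
  · simp
  · simp

lemma brk_add_left (x x' y : A →₀ T) : brk φ (x + x') y = brk φ x y + brk φ x' y := by
  unfold brk
  rw [Finsupp.sum_add_index']
  · intro α; simp
  · intro α a a'
    rw [← Finsupp.sum_add]
    congr 1
    funext β b
    rw [← Finsupp.single_add]
    congr 1
    simp only [map_add, LinearMap.add_apply, AddMonoidHom.add_apply, add_smul, smul_add]
    abel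

lemma brk_add_right (x y y' : A →₀ T) : brk φ x (y + y') = brk φ x y + brk φ x y' := by
  unfold brk
  rw [← Finsupp.sum_add]
  congr 1
  funext α a
  rw [Finsupp.sum_add_index']
  · intro β; simp
  · intro β b b'
    rw [← Finsupp.single_add]
    congr 1
    simp only [map_add, LinearMap.add_apply, AddMonoidHom.add_apply, add_smul, smul_add]
    abel

lemma brk_neg_swap (x y : A →₀ T) : brk φ y x = - brk φ x y := by
  unfold brk
  rw [Finsupp.sum_comm]
  rw [← Finsupp.sum_neg]
  congr 1
  funext α a
  rw [← Finsupp.sum_neg]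
  congr 1
  funext β b
  rw [← Finsupp.single_neg, add_comm β α]
  congr 1
  abel

lemma brk_smul_right (c : F) (x y : A →₀ T) : brk φ x (c • y) = c • brk φ x y := by
  unfold brk
  rw [Finsupp.smul_sum]
  congr 1
  funext α a
  rw [Finsupp.sum_smul_index', Finsupp.smul_sum]
  · congr 1
    funext β b
    rw [Finsupp.smul_single]
    congr 1
    simp only [map_smul, LinearMap.smul_apply, AddMonoidHom.smul_apply, smul_sub, smul_smul,
      smul_eq_mul]
    rw [mul_comm]
  · intro β; simp

lemma brk_self [CharZero F] (x : A →₀ T) : brk φ x x = 0 := by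
  have h : brk φ x x = -brk φ x x := brk_neg_swap φ x x
  have h2 : (2 : F) • brk φ x x = 0 := by
    rw [two_smul]
    nth_rewrite 2 [h]
    simp
  calc brk φ x x = (2 : F)⁻¹ • ((2 : F) • brk φ x x) :=
        (inv_smul_smul₀ two_ne_zero _).symm
    _ = 0 := by rw [h2, smul_zero]

lemma brk_leibniz (x y z : A →₀ T) :
    brk φ x (brk φ y z) = brk φ (brk φ x y) z + brk φ y (brk φ x z) := by
  induction x using Finsupp.induction_linear with
  | zero => simp [brk_zero_left, brk_zero_right]
  | add f g hf hg =>
      simp only [brk_add_left, brk_add_right, hf, hg]; abel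
  | single α a =>
    induction y using Finsupp.induction_linear with
    | zero => simp [brk_zero_left, brk_zero_right]
    | add f g hf hg =>
        simp only [brk_add_left, brk_add_right, hf, hg]; abel
    | single β b =>
      induction z using Finsupp.induction_linear with
      | zero => simp [brk_zero_left, brk_zero_right]
      | add f g hf hg =>
          simp only [brk_add_left, brk_add_right, hf, hg]; abel
      | single γ c =>
        rw [brk_single_single, brk_single_single, brk_single_single, brk_single_single,
          brk_single_single, brk_single_single]
        rw [show β + (α + γ) = α + β + γ by abel, show α + (β + γ) = α + β + γ by abel,
          ← Finsupp.single_add]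
        congr 1
        simp only [map_add, map_sub, map_smul, LinearMap.sub_apply, LinearMap.smul_apply,
          AddMonoidHom.add_apply, AddMonoidHom.sub_apply, AddMonoidHom.smul_apply,
          smul_eq_mul, smul_sub, sub_smul, add_smul, smul_smul]
        ring_nf
        module

variable (F A T) in
/-- The carrier of the generalized Witt algebra `W(A,T,φ)`: finitely supported
functions from `A` to `T`, where `t^α ∂` corresponds to the function supported
at `α` with value `∂`. -/
@[nolint unusedArguments]
def W (_φ : T →ₗ[F] (A →+ F)) : Type _ := A →₀ T

noncomputable instance : AddCommGroup (W F A T φ) := inferInstanceAs (AddCommGroup (A →₀ T))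

noncomputable instance : Module F (W F A T φ) := inferInstanceAs (Module F (A →₀ T))

/-- The element `t^α ∂` of the generalized Witt algebra. -/
noncomputable def tt (α : A) (d : T) : W F A T φ := Finsupp.single α d

/-- The underlying finitely supported function of an element of `W(A,T,φ)`. -/
def toF (x : W F A T φ) : A →₀ T := x

/-- The Lie ring structure on the generalized Witt algebra `W(A,T,φ)`, with bracket
determined by `[t^α ∂, t^β ∂'] = t^(α+β) (φ(∂,β) • ∂' - φ(∂',α) • ∂)`. -/
noncomputable instance [CharZero F] : LieRing (W F A T φ) :=
  { (inferInstance : AddCommGroup (A →₀ T)) with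
    bracket := fun x y => brk φ (toF φ x) (toF φ y)
    add_lie := fun x y z => brk_add_left φ x y z
    lie_add := fun x y z => brk_add_right φ x y z
    lie_self := fun x => brk_self φ x
    leibniz_lie := fun x y z => brk_leibniz φ x y z }

/-- The generalized Witt algebra `W(A,T,φ)` as a Lie algebra over `F`. -/
noncomputable instance [CharZero F] : LieAlgebra F (W F A T φ) :=
  { (inferInstance : Module F (A →₀ T)) with
    lie_smul := fun c x y => brk_smul_right φ c x y }

@[simp] theorem bracket_tt [CharZero F] (α β : A) (a b : T) :
    ⁅tt φ α a, tt φ β b⁆ = tt φ (α + β) (φ a β • b - φ b α • a) :=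
  brk_single_single φ α β a b

/-- Nondegeneracy of the map `φ`. -/
def Nondeg : Prop :=
  (∀ α : A, (∀ d : T, φ d α = 0) → α = 0) ∧ (∀ d : T, (∀ α : A, φ d α = 0) → d = 0)

/-- `(A', T')` is a nondegenerate pair for `φ`. -/
def NondegPair (A' : AddSubgroup A) (T' : Submodule F T) : Prop :=
  (∀ d ∈ T', (∀ α ∈ A', φ d α = 0) → d = 0) ∧
  (∀ α ∈ A', (∀ d ∈ T', φ d α = 0) → α = 0)

/-- The subset (in fact Lie subalgebra) of `W(A,T,φ)` consisting of the finitely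
supported functions supported in `A'` with values in `T'`. -/
def supportedIn (A' : AddSubgroup A) (T' : Submodule F T) : Set (W F A T φ) :=
  {x | (∀ α : A, toF φ x α ∈ T') ∧ ∀ α : A, α ∉ A' → toF φ x α = 0}

end GW

/-!
Automorphisms of `W` preserve `W₀ = {t^0 ∂}`, since these are exactly the ad-locally finite
elements: `A` is free (finitely generated, and torsion-free by nondegeneracy), so a nonzero
component of `x` in some degree `≠ 0` yields a degree `μ ≠ 0` of `x` that is strictly
`ℓ`-maximal for some `ℓ : A →+ ℚ`, and then the iterates `(ad x)^k (t^(β+μ) ∂)` have leading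
terms in the infinitely many degrees `β + (k+1)μ`.

Let `S` generate `A`, put `P = {0} ∪ S ∪ -S`, choose `d₀` with `φ(d₀, ·)` injective on `P`, and
let `w = ∑_{g ∈ P} t^g d₀`. Comparing components, an automorphism fixing `w` fixes each
`t^g d₀`; the eigenvalues of `W₀` then force it to act trivially on `W₀` and on degrees, i.e.
`t^α ∂ ↦ t^α τ_α(∂)`. The bracket relations give `τ_α = 1` first for `α ∈ ±S` and then, moving
by `±S`, for all `α`. So `w` has trivial stabilizer, and a 2-local automorphism `Φ` equals the
automorphism `θ₀` agreeing with it at `w`: for every `y`, an automorphism agreeing with `Φ` at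
`w` and `y` differs from `θ₀` by an element of the stabilizer of `w`.
-/

namespace LieAlgebra

variable {R L L' : Type*} [CommRing R] [LieRing L] [LieAlgebra R L] [LieRing L'] [LieAlgebra R L']

theorem exists_lieEquiv_coe_eq_of_twoLocal (w : L)
    (hw : ∀ θ : L ≃ₗ⁅R⁆ L, θ w = w → ∀ v, θ v = v) (Φ : L → L)
    (h2loc : ∀ x y : L, ∃ θ : L ≃ₗ⁅R⁆ L, Φ x = θ x ∧ Φ y = θ y) :
    ∃ θ : L ≃ₗ⁅R⁆ L, ⇑θ = Φ := by
  obtain ⟨θ₀, hθ₀, -⟩ := h2loc w w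
  refine ⟨θ₀, funext fun y => ?_⟩
  obtain ⟨θ, hθw, hθy⟩ := h2loc w y
  have hfix : θ₀.symm (θ w) = w := by rw [← hθw, hθ₀, θ₀.symm_apply_apply]
  have hy : θ₀.symm (θ y) = y := hw (θ.trans θ₀.symm) hfix y
  rw [hθy, ← θ₀.apply_symm_apply (θ y), hy]

variable (R) in
def IsAdLocallyFinite (x : L) : Prop :=
  ∀ y : L, ∃ V : Submodule R L, V.FG ∧ y ∈ V ∧ ∀ v ∈ V, ⁅x, v⁆ ∈ V

theorem IsAdLocallyFinite.map {x : L} (h : IsAdLocallyFinite R x) (θ : L ≃ₗ⁅R⁆ L') :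
    IsAdLocallyFinite R (θ x) := by
  intro y
  obtain ⟨V, hV, hyV, hxV⟩ := h (θ.symm y)
  refine ⟨V.map θ.toLinearMap, hV.map _, ⟨_, hyV, θ.apply_symm_apply y⟩, ?_⟩
  rintro _ ⟨v, hv, rfl⟩
  exact ⟨_, hxV v hv, θ.map_lie x v⟩

end LieAlgebra

theorem Module.exists_forall_ne_zero {ι K M : Type*} [Field K] [Infinite K] [AddCommGroup M]
    [Module K M] (s : Finset ι) (f : ι → Module.Dual K M) (hf : ∀ i ∈ s, f i ≠ 0) :
    ∃ x : M, ∀ i ∈ s, f i x ≠ 0 := by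
  obtain ⟨x, -, hx⟩ := Set.exists_of_ssubset <|
    Submodule.iUnion_ssubset_of_forall_ne_top_of_card_lt (Finset.univ : Finset s)
      (fun i => LinearMap.ker (f i)) (fun i => by simpa using hf i i.2)
      (by simp [ENat.card_eq_top_of_infinite])
  exact ⟨x, fun i hi hxi =>
    hx (Set.mem_biUnion (Finset.mem_univ ⟨i, hi⟩) (LinearMap.mem_ker.mpr hxi))⟩

def AddMonoidHom.evalₗ {A : Type*} (K : Type*) [AddCommGroup A] [Field K] (a : A) :
    Module.Dual K (A →+ K) where
  toFun ℓ := ℓ a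
  map_add' _ _ := rfl
  map_smul' _ _ := rfl

theorem AddMonoidHom.exists_rat_forall_ne_zero {A : Type*} [AddCommGroup A] [AddGroup.FG A]
    [IsAddTorsionFree A] (D : Finset A) (hD : 0 ∉ D) : ∃ ℓ : A →+ ℚ, ∀ v ∈ D, ℓ v ≠ 0 := by
  have : Module.Finite ℤ A := Module.Finite.iff_addGroup_fg.mpr ‹_›
  refine Module.exists_forall_ne_zero D (AddMonoidHom.evalₗ ℚ) fun v hv hzero => ?_
  obtain ⟨f, hf⟩ := Module.Projective.exists_dual_ne_zero ℤ (ne_of_mem_of_not_mem hv hD)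
  have := LinearMap.congr_fun hzero ((Int.castAddHom ℚ).comp f.toAddMonoidHom)
  exact hf (by simpa [AddMonoidHom.evalₗ] using this)

theorem AddMonoidHom.exists_forall_add_nsmul_ne_zero {A K : Type*} [AddCommGroup A] [Field K]
    [CharZero K] {f : A →+ K} (hf : f ≠ 0) (μ : A) : ∃ β, ∀ t : ℕ, f (β + t • μ) ≠ 0 := by
  by_cases hμ : f μ = 0
  · obtain ⟨β, hβ⟩ := DFunLike.ne_iff.mp hf
    exact ⟨β, fun t => by simpa [hμ] using hβ⟩
  · refine ⟨μ, fun t => ?_⟩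
    rw [← succ_nsmul', map_nsmul, nsmul_eq_mul]
    exact mul_ne_zero (by exact_mod_cast Nat.succ_ne_zero t) hμ

theorem AddMonoidHom.exists_rat_strictMax {A : Type*} [AddCommGroup A] [AddGroup.FG A]
    [IsAddTorsionFree A] (s : Finset A) {α₀ : A} (hα₀ : α₀ ∈ s) (h0 : α₀ ≠ 0) :
    ∃ ℓ : A →+ ℚ, ∃ μ ∈ s, 0 < ℓ μ ∧ ∀ α ∈ s, α ≠ μ → ℓ α < ℓ μ := by
  classical
  obtain ⟨ℓ₀, hℓ₀⟩ := AddMonoidHom.exists_rat_forall_ne_zero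
    (insert α₀ (s.offDiag.image fun p => p.1 - p.2)) (by simp [sub_eq_zero, Ne.symm h0])
  have hinj : ∀ a ∈ s, ∀ b ∈ s, a ≠ b → ℓ₀ a ≠ ℓ₀ b := fun a ha b hb hab h =>
    hℓ₀ (a - b)
      (Finset.mem_insert_of_mem (Finset.mem_image.mpr ⟨(a, b), by simp [ha, hb, hab], rfl⟩))
      (by rw [map_sub, h, sub_self])
  obtain ⟨ℓ, hℓinj, hℓα₀⟩ : ∃ ℓ : A →+ ℚ, (∀ a ∈ s, ∀ b ∈ s, a ≠ b → ℓ a ≠ ℓ b) ∧ 0 < ℓ α₀ := by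
    rcases (hℓ₀ α₀ (Finset.mem_insert_self _ _)).lt_or_gt with h | h
    · exact ⟨-ℓ₀, fun a ha b hb hab => by simpa using hinj a ha b hb hab, by simpa using h⟩
    · exact ⟨ℓ₀, hinj, h⟩
  obtain ⟨μ, hμ, hmax⟩ := s.exists_max_image ℓ ⟨α₀, hα₀⟩
  exact ⟨ℓ, μ, hμ, hℓα₀.trans_le (hmax α₀ hα₀),
    fun α hα hne => (hmax α hα).lt_of_ne (hℓinj α hα μ hμ hne)⟩

theorem Submodule.FG.exists_le_supported {R M α : Type*} [Semiring R] [AddCommMonoid M]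
    [Module R M] {V : Submodule R (α →₀ M)} (hV : V.FG) :
    ∃ S : Finset α, V ≤ Finsupp.supported M R ↑S := by
  classical
  obtain ⟨t, rfl⟩ := hV
  refine ⟨t.biUnion Finsupp.support, Submodule.span_le.mpr fun v hv => ?_⟩
  exact (Finsupp.mem_supported _ _).mpr fun a ha => by
    simpa using ⟨v, hv, Finsupp.mem_support_iff.mp ha⟩

theorem AddGroup.exists_finset_zero_mem_neg_mem_closure_eq_top (A : Type*) [AddCommGroup A]
    [AddGroup.FG A] :
    ∃ P : Finset A, 0 ∈ P ∧ (∀ g ∈ P, -g ∈ P) ∧ AddSubgroup.closure (P : Set A) = ⊤ := by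
  classical
  obtain ⟨S, hS⟩ := (AddGroup.FG.out : (⊤ : AddSubgroup A).FG)
  refine ⟨insert 0 (S ∪ S.image Neg.neg), Finset.mem_insert_self _ _, ?_,
    eq_top_mono (AddSubgroup.closure_mono fun x hx =>
      Finset.mem_insert_of_mem (Finset.mem_union_left _ hx)) hS⟩
  simp only [Finset.mem_insert, Finset.mem_union, Finset.mem_image]
  rintro g (rfl | hg | ⟨s, hs, rfl⟩)
  · exact Or.inl neg_zero
  · exact Or.inr (Or.inr ⟨g, hg, rfl⟩)
  · exact Or.inr (Or.inl (by rwa [neg_neg]))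

namespace GW

open Finsupp

variable {F : Type*} [Field F]
variable {A : Type*} [AddCommGroup A]
variable {T : Type*} [AddCommGroup T] [Module F T]
variable (φ : T →ₗ[F] (A →+ F))

theorem brk_apply [DecidableEq A] (x y : A →₀ T) (δ : A) :
    brk φ x y δ = ∑ α ∈ x.support, ∑ β ∈ y.support,
      if α + β = δ then φ (x α) β • y β - φ (y β) α • x α else 0 := by
  simp only [brk, Finsupp.sum_apply, Finsupp.single_apply]
  rfl

theorem exists_add_eq_of_mem_support_brk {x y : A →₀ T} {δ : A}
    (hδ : δ ∈ (brk φ x y).support) : ∃ α ∈ x.support, ∃ β ∈ y.support, α + β = δ := by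
  classical
  by_contra! h
  refine Finsupp.mem_support_iff.mp hδ ?_
  rw [brk_apply]
  exact Finset.sum_eq_zero fun α hα => Finset.sum_eq_zero fun β hβ => if_neg (h α hα β hβ)

theorem brk_apply_add_of_strictMax (ℓ : A →+ ℚ) {x y : A →₀ T} {μ γ : A}
    (hx : ∀ α ∈ x.support, α ≠ μ → ℓ α < ℓ μ) (hy : ∀ β ∈ y.support, ℓ β ≤ ℓ γ) :
    brk φ x y (μ + γ) = φ (x μ) γ • y γ - φ (y γ) μ • x μ := by
  classical
  rw [brk_apply, Finset.sum_eq_single μ, Finset.sum_eq_single γ]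
  · simp
  · intro β _ hβ
    exact if_neg fun h => hβ (add_left_cancel h)
  · intro hγ
    simp [Finsupp.notMem_support_iff.mp hγ]
  · intro α hα hαμ
    refine Finset.sum_eq_zero fun β hβ => if_neg fun h => ?_
    have hℓ : ℓ α + ℓ β = ℓ μ + ℓ γ := by rw [← map_add, h, map_add]
    linarith [hx α hα hαμ, hy β hβ]
  · intro hμ
    simp [Finsupp.notMem_support_iff.mp hμ]

theorem brk_single_zero_apply (d : T) (y : A →₀ T) (γ : A) :
    brk φ (single 0 d) y γ = φ d γ • y γ := by
  induction y using Finsupp.induction_linear with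
  | zero => simp [brk_zero_right]
  | add y y' hy hy' => simp [brk_add_right, hy, hy']
  | single β v =>
    rcases eq_or_ne β γ with rfl | h
    · simp [brk_single_single]
    · simp [brk_single_single, h]

theorem brk_iterate_apply_of_strictMax (ℓ : A →+ ℚ) {x : A →₀ T} {μ β : A}
    (hx : ∀ α ∈ x.support, α ≠ μ → ℓ α < ℓ μ) (hβ : ∀ t : ℕ, φ (x μ) (β + t • μ) ≠ 0)
    (k : ℕ) :
    (∀ δ ∈ ((brk φ x)^[k] (single (β + μ) (x μ))).support, ℓ δ ≤ ℓ (β + (k + 1) • μ)) ∧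
      ∃ c : F, c ≠ 0 ∧ (brk φ x)^[k] (single (β + μ) (x μ)) (β + (k + 1) • μ) = c • x μ := by
  induction k with
  | zero =>
    refine ⟨fun δ hδ => ?_, 1, one_ne_zero, by simp⟩
    simp [Finset.mem_singleton.mp (support_single_subset hδ)]
  | succ k ih =>
    obtain ⟨hsupp, c, hc, hcoef⟩ := ih
    have htop : β + (k + 1 + 1) • μ = μ + (β + (k + 1) • μ) := by rw [succ_nsmul]; abel
    rw [Function.iterate_succ_apply', htop]
    refine ⟨fun δ hδ => ?_, c * φ (x μ) (β + k • μ), mul_ne_zero hc (hβ k), ?_⟩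
    · obtain ⟨α, hα, γ, hγ, rfl⟩ := exists_add_eq_of_mem_support_brk φ hδ
      have hαμ : ℓ α ≤ ℓ μ := by
        rcases eq_or_ne α μ with rfl | h
        · exact le_rfl
        · exact (hx α hα h).le
      rw [map_add, map_add]
      linarith [hsupp γ hγ]
    · rw [brk_apply_add_of_strictMax φ ℓ hx hsupp, hcoef,
        show β + k • μ = β + (k + 1) • μ - μ by rw [succ_nsmul]; abel]
      simp only [map_smul, map_sub, AddMonoidHom.smul_apply, smul_eq_mul]
      module

section Nondeg

variable {φ}

theorem Nondeg.exists_ne_zero (hφ : Nondeg φ) {α : A} (hα : α ≠ 0) : ∃ d : T, φ d α ≠ 0 := by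
  by_contra! h
  exact hα (hφ.1 α h)

theorem Nondeg.ne_zero (hφ : Nondeg φ) {d : T} (hd : d ≠ 0) : φ d ≠ 0 :=
  fun h => hd (hφ.2 d fun α => by simp [h])

theorem Nondeg.isAddTorsionFree [CharZero F] (hφ : Nondeg φ) : IsAddTorsionFree A := by
  let ι : A →+ (T → F) :=
    { toFun := fun α d => φ d α
      map_zero' := by ext; simp
      map_add' := fun _ _ => by ext; simp }
  refine Function.Injective.isAddTorsionFree ι fun α β h => sub_eq_zero.mp <| hφ.1 _ fun d => ?_
  rw [map_sub, sub_eq_zero]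
  exact congrFun h d

theorem Nondeg.exists_injOn [CharZero F] (hφ : Nondeg φ) (P : Finset A) :
    ∃ d : T, Set.InjOn (φ d) P := by
  classical
  obtain ⟨d, hd⟩ := Module.exists_forall_ne_zero (P.offDiag.image fun p => p.1 - p.2)
    (fun v => AddMonoidHom.evalₗ F v ∘ₗ φ) fun v hv hzero => by
      obtain ⟨⟨p, q⟩, hpq, rfl⟩ := Finset.mem_image.mp hv
      obtain ⟨d, hd⟩ := hφ.exists_ne_zero (sub_ne_zero.mpr (Finset.mem_offDiag.mp hpq).2.2)
      exact hd (LinearMap.congr_fun hzero d)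
  refine ⟨d, fun p hp q hq hpq => ?_⟩
  by_contra hne
  refine hd (p - q) (Finset.mem_image.mpr ⟨(p, q), by simp_all, rfl⟩) ?_
  simp [AddMonoidHom.evalₗ, hpq]

end Nondeg

/-- The relation satisfied by the components `τ α` of a Lie automorphism
`t^α ∂ ↦ t^α (τ α ∂)`: apply it to `[t^α ∂, t^β ∂']`. -/
def BracketCompatible (τ : A → Module.End F T) : Prop :=
  ∀ α β d d', τ (α + β) (φ d β • d' - φ d' α • d) = φ (τ α d) β • τ β d' - φ (τ β d') α • τ α d

namespace BracketCompatible

variable {φ} {τ : A → Module.End F T}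

theorem add_eq_one (h : BracketCompatible φ τ) (hφ : Nondeg φ) {α β : A} (hα : τ α = 1)
    (hβ : τ β = 1) (hne : α ≠ β) : τ (α + β) = 1 := by
  have hfix : ∀ d, φ d (β - α) ≠ 0 → τ (α + β) d = d := fun d hd => by
    have := h α β d d
    rw [hα, hβ, Module.End.one_apply, ← sub_smul, ← map_sub, map_smul] at this
    exact smul_right_injective T hd this
  obtain ⟨d₁, hd₁⟩ := hφ.exists_ne_zero (sub_ne_zero.mpr hne.symm)
  ext d
  by_cases hd : φ d (β - α) = 0
  · have h1 := hfix (d + d₁) (by rwa [map_add, AddMonoidHom.add_apply, hd, zero_add])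
    rw [map_add, hfix d₁ hd₁] at h1
    exact add_right_cancel h1
  · exact hfix d hd

theorem eq_one_of_add (h : BracketCompatible φ τ) (hφ : Nondeg φ) {α β : A} (hα : τ α = 1)
    (hαβ : τ (α + β) = 1) (hβ : β ≠ 0) (hβα : β ≠ α) : τ β = 1 := by
  ext d'
  set u := d' - τ β d'
  have key : ∀ d, φ d β • u = φ u α • d := fun d => by
    have := h α β d d'
    rw [hα, hαβ] at this
    simp only [Module.End.one_apply] at this
    simp only [u, map_sub, AddMonoidHom.sub_apply, smul_sub, sub_smul]
    linear_combination (norm := module) this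
  obtain ⟨d₁, hd₁⟩ := hφ.exists_ne_zero (sub_ne_zero.mpr hβα)
  have hu : φ u α = 0 := by
    have := congrArg (fun v => φ v α) (key d₁)
    simp only [map_smul, AddMonoidHom.smul_apply, smul_eq_mul] at this
    refine (mul_eq_zero.mp (?_ : φ u α * φ d₁ (β - α) = 0)).resolve_right hd₁
    rw [(φ d₁).map_sub]
    linear_combination this
  obtain ⟨d₂, hd₂⟩ := hφ.exists_ne_zero hβ
  have := key d₂
  rw [hu, zero_smul, smul_eq_zero] at this
  exact (sub_eq_zero.mp (this.resolve_left hd₂)).symm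

theorem eq_one_of_neg_apply_eq [CharZero F] (h : BracketCompatible φ τ) (h0 : τ 0 = 1) {s : A}
    {d₀ : T} (hs : τ (-s) d₀ = d₀) (hd₀ : φ d₀ s ≠ 0) : τ s = 1 := by
  -- At `(-s, s, d₀, d')` the relation involves `τ (-s)` only through `τ (-s) d₀`.
  ext d'
  set u := d' - τ s d'
  have key : φ d₀ s • u = -(φ u s • d₀) := by
    have := h (-s) s d₀ d'
    rw [neg_add_cancel, h0, hs] at this
    simp only [Module.End.one_apply, map_neg] at this
    simp only [u, map_sub, AddMonoidHom.sub_apply, smul_sub, sub_smul]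
    linear_combination (norm := module) this
  have hu : φ u s = 0 := by
    have := congrArg (fun v => φ v s) key
    simp only [map_smul, map_neg, AddMonoidHom.smul_apply, AddMonoidHom.neg_apply,
      smul_eq_mul] at this
    have h2 : (2 * φ d₀ s) * φ u s = 0 := by linear_combination this
    exact (mul_eq_zero.mp h2).resolve_left (mul_ne_zero two_ne_zero hd₀)
  rw [hu, zero_smul, neg_zero, smul_eq_zero] at key
  exact (sub_eq_zero.mp (key.resolve_left hd₀)).symm

theorem add_eq_one_of_eq_one [CharZero F] (h : BracketCompatible φ τ) (hφ : Nondeg φ) {s γ : A}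
    (hs : τ s = 1) (hs' : τ (-s) = 1) (hγ : τ γ = 1) : τ (s + γ) = 1 := by
  have := hφ.isAddTorsionFree
  by_cases hs0 : s = 0
  · rwa [hs0, zero_add]
  by_cases hγs : γ = s
  -- `add_eq_one` does not reach `s + s`; use `s = -s + (s + s)` instead.
  · subst hγs
    refine h.eq_one_of_add hφ (α := -γ) hs' (by rwa [neg_add_cancel_left]) ?_ ?_
    · rw [← two_nsmul]
      simpa using hs0
    · rw [Ne, ← sub_eq_zero, sub_neg_eq_add, ← two_nsmul, ← succ_nsmul]
      simpa using hs0
  · exact h.add_eq_one hφ hs hγ (Ne.symm hγs)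

theorem eq_one_of_closure_eq_top [CharZero F] (h : BracketCompatible φ τ) (hφ : Nondeg φ)
    {S : Set A} (hS : AddSubgroup.closure S = ⊤) (hSτ : ∀ s ∈ S, τ s = 1 ∧ τ (-s) = 1)
    (h0 : τ 0 = 1) (α : A) : τ α = 1 := by
  have hα : α ∈ AddSubgroup.closure S := hS ▸ AddSubgroup.mem_top α
  induction hα using AddSubgroup.closure_induction_left with
  | zero => exact h0
  | add_left s hs γ _ hγ => exact h.add_eq_one_of_eq_one hφ (hSτ s hs).1 (hSτ s hs).2 hγ
  | neg_add_cancel s hs γ _ hγ =>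
    exact h.add_eq_one_of_eq_one hφ (hSτ s hs).2 (by rw [neg_neg]; exact (hSτ s hs).1) hγ

end BracketCompatible

structure IsAutPreservingDegZero (e : (A →₀ T) ≃ₗ[F] (A →₀ T)) : Prop where
  map_brk : ∀ x y, e (brk φ x y) = brk φ (e x) (e y)
  map_single_zero : ∀ d, e (single 0 d) = single 0 (e (single 0 d) 0)

noncomputable def diagonalBlock (e : (A →₀ T) ≃ₗ[F] (A →₀ T)) (α : A) : Module.End F T :=
  lapply α ∘ₗ e.toLinearMap ∘ₗ lsingle α

theorem bracketCompatible_diagonalBlock {e : (A →₀ T) ≃ₗ[F] (A →₀ T)}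
    (he : ∀ x y, e (brk φ x y) = brk φ (e x) (e y))
    (hdiag : ∀ α d, e (single α d) = single α (diagonalBlock e α d)) :
    BracketCompatible φ (diagonalBlock e) := fun α β d d' => by
  have h := he (single α d) (single β d')
  rw [brk_single_single, hdiag, hdiag, hdiag, brk_single_single] at h
  exact single_injective _ h

namespace IsAutPreservingDegZero

variable {φ} {e : (A →₀ T) ≃ₗ[F] (A →₀ T)}

theorem φ_map_single_zero_apply (he : IsAutPreservingDegZero φ e) {α γ : A} {d : T}
    (hγ : e (single α d) γ ≠ 0) (d' : T) : φ (e (single 0 d') 0) γ = φ d' α := by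
  have h := congrArg (· γ) (he.map_brk (single 0 d') (single α d))
  rw [he.map_single_zero, brk_single_zero_apply, brk_single_single] at h
  simp only [zero_add, map_zero, zero_smul, sub_zero, ← smul_single, map_smul,
    Finsupp.smul_apply] at h
  exact smul_left_injective F hγ h.symm

theorem eq_of_map_single_apply_ne_zero (he : IsAutPreservingDegZero φ e) (hφ : Nondeg φ)
    {α β γ : A} {d d' : T} (hα : e (single α d) γ ≠ 0) (hβ : e (single β d') γ ≠ 0) :
    α = β :=
  sub_eq_zero.mp <| hφ.1 _ fun x => by
    rw [map_sub, ← he.φ_map_single_zero_apply hα, ← he.φ_map_single_zero_apply hβ, sub_self]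

theorem map_single_eq_single_diagonalBlock (he : IsAutPreservingDegZero φ e) (hφ : Nondeg φ)
    (h0 : ∀ x, e (single 0 x) 0 = x) (α : A) (d : T) :
    e (single α d) = single α (diagonalBlock e α d) := by
  ext γ
  rcases eq_or_ne γ α with rfl | hγ
  · simp [diagonalBlock]
  · rw [single_eq_of_ne' (Ne.symm hγ)]
    by_contra hz
    refine hγ (sub_eq_zero.mp (hφ.1 _ fun x => ?_))
    rw [map_sub, ← he.φ_map_single_zero_apply hz, h0, sub_self]

section Fixed

variable {P : Finset A} {d₀ : T}

theorem mem_of_map_single_apply_ne_zero (he : IsAutPreservingDegZero φ e) (hφ : Nondeg φ)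
    (hfix : e (∑ g ∈ P, single g d₀) = ∑ g ∈ P, single g d₀) {g γ : A} (hg : g ∈ P)
    (hγ : e (single g d₀) γ ≠ 0) : γ ∈ P ∧ e (single g d₀) γ = d₀ := by
  classical
  have hsum : e (∑ g ∈ P, single g d₀) γ = e (single g d₀) γ := by
    rw [map_sum, finsetSum_apply, Finset.sum_eq_single g (fun g' _ hg' => ?_) (absurd hg)]
    by_contra hne
    exact hg' (he.eq_of_map_single_apply_ne_zero hφ hne hγ)
  rw [hfix, finsetSum_apply] at hsum
  simp only [single_apply, Finset.sum_ite_eq'] at hsum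
  split_ifs at hsum with hγP
  · exact ⟨hγP, hsum.symm⟩
  · exact absurd hsum.symm hγ

theorem map_single_zero_apply_zero (he : IsAutPreservingDegZero φ e) (hφ : Nondeg φ)
    (hP : AddSubgroup.closure (P : Set A) = ⊤) (hP0 : 0 ∈ P) (hd₀ : Set.InjOn (φ d₀) P)
    (hd₀0 : d₀ ≠ 0) (hfix : e (∑ g ∈ P, single g d₀) = ∑ g ∈ P, single g d₀) (x : T) :
    e (single 0 x) 0 = x := by
  have hne : ∀ α, e (single α d₀) ≠ 0 := fun α h =>
    hd₀0 (single_eq_zero.mp (e.map_eq_zero_iff.mp h))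
  have hτd₀ : e (single 0 d₀) 0 = d₀ := by
    refine (he.mem_of_map_single_apply_ne_zero hφ hfix hP0 fun h => hne 0 ?_).2
    rw [he.map_single_zero, h, single_zero]
  have hφP : ∀ g ∈ P, φ (e (single 0 x) 0) g = φ x g := fun g hg => by
    obtain ⟨γ, hγ⟩ : ∃ γ, e (single g d₀) γ ≠ 0 := by
      by_contra! h
      exact hne g (Finsupp.ext h)
    have hγg : γ = g := hd₀ (he.mem_of_map_single_apply_ne_zero hφ hfix hg hγ).1 hg
      (by rw [← he.φ_map_single_zero_apply hγ, hτd₀])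
    exact hγg ▸ he.φ_map_single_zero_apply hγ x
  have hφx := AddMonoidHom.eq_of_eqOn_dense hP hφP
  exact sub_eq_zero.mp (hφ.2 _ fun α => by rw [map_sub, hφx, sub_self, AddMonoidHom.zero_apply])

theorem apply_eq_self_of_fixes_sum_single [CharZero F] (he : IsAutPreservingDegZero φ e)
    (hφ : Nondeg φ) (hP : AddSubgroup.closure (P : Set A) = ⊤) (hP0 : 0 ∈ P)
    (hPneg : ∀ g ∈ P, -g ∈ P) (hd₀ : Set.InjOn (φ d₀) P) (hd₀0 : d₀ ≠ 0)
    (hfix : e (∑ g ∈ P, single g d₀) = ∑ g ∈ P, single g d₀) (v : A →₀ T) : e v = v := by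
  have h0 := he.map_single_zero_apply_zero hφ hP hP0 hd₀ hd₀0 hfix
  have hdiag := he.map_single_eq_single_diagonalBlock hφ h0
  have hτ := bracketCompatible_diagonalBlock φ he.map_brk hdiag
  have hτ0 : diagonalBlock e 0 = 1 := LinearMap.ext h0
  have hτP : ∀ g ∈ P, diagonalBlock e g d₀ = d₀ := fun g hg => by
    have hne : diagonalBlock e g d₀ ≠ 0 := fun h => hd₀0 <| single_eq_zero.mp <|
      e.map_eq_zero_iff.mp (by rw [hdiag, h, single_zero])
    have := (he.mem_of_map_single_apply_ne_zero hφ hfix hg (γ := g) (by simpa [hdiag] using hne)).2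
    simpa [hdiag] using this
  have hτP1 : ∀ g ∈ P, diagonalBlock e g = 1 := fun g hg => by
    rcases eq_or_ne g 0 with rfl | hg0
    · exact hτ0
    · refine hτ.eq_one_of_neg_apply_eq hτ0 (hτP _ (hPneg g hg)) fun h => hg0 (hd₀ hg hP0 ?_)
      rw [h, map_zero]
  have hτ1 := hτ.eq_one_of_closure_eq_top hφ hP
    (fun s hs => ⟨hτP1 s hs, hτP1 _ (hPneg s hs)⟩) hτ0
  have he1 : e.toLinearMap = LinearMap.id := lhom_ext fun α d => by simp [hdiag, hτ1]
  exact LinearMap.congr_fun he1 v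

end Fixed

end IsAutPreservingDegZero

@[simp] theorem toF_tt (α : A) (d : T) : toF φ (tt φ α d) = single α d := rfl

theorem ext_toF {x y : W F A T φ} (h : ∀ γ, toF φ x γ = toF φ y γ) : x = y := Finsupp.ext h

section Lie

variable [CharZero F]

@[simp] theorem lie_tt_zero_tt (d : T) (β : A) (v : T) :
    ⁅tt φ 0 d, tt φ β v⁆ = φ d β • tt φ β v := by
  rw [bracket_tt]
  simp only [zero_add, map_zero, zero_smul, sub_zero]
  exact (smul_single _ _ _).symm

theorem isAdLocallyFinite_tt_zero (d : T) : LieAlgebra.IsAdLocallyFinite F (tt φ 0 d) := by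
  intro y
  set V := Submodule.span F ((fun β => tt φ β (toF φ y β)) '' (toF φ y).support)
  refine ⟨V, Submodule.fg_span ((Finset.finite_toSet _).image _), ?_, fun v hv => ?_⟩
  · have hy : ∑ β ∈ (toF φ y).support, tt φ β (toF φ y β) = y := sum_single (toF φ y)
    rw [← hy]
    exact Submodule.sum_mem V fun β hβ => Submodule.subset_span ⟨β, hβ, rfl⟩
  -- `W` has two defeq but distinct additive structures, its own and the Lie ring's, so we go
  -- through `span_le` instead of rewriting with `lie_add` in a `span_induction`.
  · have hV : V ≤ V.comap (LieAlgebra.ad F _ (tt φ 0 d)) := by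
      refine Submodule.span_le.mpr ?_
      rintro _ ⟨β, hβ, rfl⟩
      show ⁅tt φ 0 d, tt φ β (toF φ y β)⁆ ∈ V
      rw [lie_tt_zero_tt]
      exact Submodule.smul_mem _ _ (Submodule.subset_span ⟨β, hβ, rfl⟩)
    exact hV hv

variable [AddGroup.FG A]

theorem not_isAdLocallyFinite (hφ : Nondeg φ) {x : W F A T φ} {α₀ : A}
    (hα₀ : toF φ x α₀ ≠ 0) (h0 : α₀ ≠ 0) : ¬ LieAlgebra.IsAdLocallyFinite F x := by
  have := hφ.isAddTorsionFree
  obtain ⟨ℓ, μ, hμ, hℓμ, hmax⟩ :=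
    AddMonoidHom.exists_rat_strictMax (toF φ x).support (mem_support_iff.mpr hα₀) h0
  have hxμ : toF φ x μ ≠ 0 := mem_support_iff.mp hμ
  obtain ⟨β, hβ⟩ := AddMonoidHom.exists_forall_add_nsmul_ne_zero (hφ.ne_zero hxμ) μ
  intro hLF
  obtain ⟨V, hVfg, hyV, hVinv⟩ := hLF (tt φ (β + μ) (toF φ x μ))
  obtain ⟨S, hS⟩ := hVfg.exists_le_supported
  have hmem : ∀ k, (brk φ (toF φ x))^[k] (single (β + μ) (toF φ x μ)) ∈ V := by
    intro k
    induction k with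
    | zero => exact hyV
    | succ k ih => rw [Function.iterate_succ_apply']; exact hVinv _ ih
  have hS' : ∀ k : ℕ, β + (k + 1) • μ ∈ S := fun k => by
    obtain ⟨-, c, hc, hcoef⟩ := brk_iterate_apply_of_strictMax φ ℓ hmax hβ k
    exact (mem_supported _ _).mp (hS (hmem k))
      (mem_support_iff.mpr (by rw [hcoef]; exact smul_ne_zero hc hxμ))
  refine Set.infinite_range_of_injective (f := fun k : ℕ => β + (k + 1) • μ) (fun k k' h => ?_)
    (S.finite_toSet.subset (Set.range_subset_iff.mpr hS'))
  have := congrArg ℓ h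
  simp only [map_add, map_nsmul, nsmul_eq_mul, add_right_inj] at this
  exact Nat.succ_injective (by exact_mod_cast mul_right_cancel₀ hℓμ.ne' this)

theorem lieEquiv_tt_zero (hφ : Nondeg φ) (θ : W F A T φ ≃ₗ⁅F⁆ W F A T φ)
    (d : T) : θ (tt φ 0 d) = tt φ 0 (toF φ (θ (tt φ 0 d)) 0) := by
  refine ext_toF φ fun γ => ?_
  rcases eq_or_ne γ 0 with rfl | hγ
  · simp
  · rw [toF_tt, single_eq_of_ne' (Ne.symm hγ)]
    by_contra hz
    exact not_isAdLocallyFinite φ hφ hz hγ ((isAdLocallyFinite_tt_zero φ d).map θ)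

theorem isAutPreservingDegZero_lieEquiv (hφ : Nondeg φ) (θ : W F A T φ ≃ₗ⁅F⁆ W F A T φ) :
    IsAutPreservingDegZero φ θ.toLinearEquiv :=
  ⟨θ.map_lie, lieEquiv_tt_zero φ hφ θ⟩

theorem exists_stabilizer_trivial (hA : Nontrivial A) (hφ : Nondeg φ) :
    ∃ w : A →₀ T, ∀ e : (A →₀ T) ≃ₗ[F] (A →₀ T), IsAutPreservingDegZero φ e → e w = w →
      ∀ v, e v = v := by
  obtain ⟨P, hP0, hPneg, hP⟩ := AddGroup.exists_finset_zero_mem_neg_mem_closure_eq_top A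
  obtain ⟨d₀, hinj⟩ := hφ.exists_injOn P
  obtain ⟨g, hg, hg0⟩ : ∃ g ∈ P, g ≠ 0 := by
    by_contra! h
    exact top_ne_bot (hP ▸ AddSubgroup.closure_eq_bot_iff.mpr fun g hg => h g hg)
  have hd₀0 : d₀ ≠ 0 := by
    rintro rfl
    exact hg0 (hinj hg hP0 (by simp))
  exact ⟨∑ g ∈ P, single g d₀, fun e he hfix =>
    he.apply_eq_self_of_fixes_sum_single hφ hP hP0 hPneg hinj hd₀0 hfix⟩

theorem exists_lieEquiv_stabilizer_trivial (hA : Nontrivial A) (hφ : Nondeg φ) :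
    ∃ w : W F A T φ, ∀ θ : W F A T φ ≃ₗ⁅F⁆ W F A T φ, θ w = w → ∀ v, θ v = v := by
  obtain ⟨w, hw⟩ := exists_stabilizer_trivial φ hA hφ
  exact ⟨w, fun θ => hw θ.toLinearEquiv (isAutPreservingDegZero_lieEquiv φ hφ θ)⟩

end Lie

end GW

theorem GW.twoLocalAut_is_aut_of_fg
    {F : Type*} [Field F] [CharZero F]
    {A : Type*} [AddCommGroup A] [AddGroup.FG A]
    {T : Type*} [AddCommGroup T] [Module F T]
    (φ : T →ₗ[F] (A →+ F))
    (hA : Nontrivial A) (hφ : GW.Nondeg φ)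
    (Φ : GW.W F A T φ → GW.W F A T φ)
    (h2loc : ∀ x y : GW.W F A T φ,
      ∃ θ : GW.W F A T φ ≃ₗ⁅F⁆ GW.W F A T φ, Φ x = θ x ∧ Φ y = θ y) :
    ∃ θ : GW.W F A T φ ≃ₗ⁅F⁆ GW.W F A T φ, ⇑θ = Φ := by
  obtain ⟨w, hw⟩ := GW.exists_lieEquiv_stabilizer_trivial φ hA hφ
  exact LieAlgebra.exists_lieEquiv_coe_eq_of_twoLocal w hw Φ h2loc
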